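/- arXiv:1704.02737 — 5 statements merged into one kernel-verified Lean document; each statement's English description precedes it below -/
import Mathlib

section
/- Let $S_i$ and $S_j$ be two autonomous discrete-time linear systems with matrices $A_i, A_j \in \mathbb{R}^{n\times n}$, $C_i, C_j \in \mathbb{R}^{p\times n}$, subject to sensor attacks, and let $\sigma \in \mathbb{N}$. Then the following are equivalent: (i) ($\sigma$-secure distinguishability) for every pair of initial states $(x_{0i}, x_{0j}) \neq (0,0)$ and every pair of cyclic $\sigma$-sparse attack sequences $w_i, w_j : \mathbb{N} \to \mathbb{R}^p$, there exists $t \in \{0,\dots,2n-1\}$ such that $C_i A_i^t x_{0i} + w_i(t) \neq C_j A_j^t x_{0j} + w_j(t)$; (ii) for every set $\Gamma \subseteq \{1,\dots,p\}$ with $|\Gamma| \leq 2\sigma$, the linear map sending $(x_{0i}, x_{0j}) \in \mathbb{R}^n \times \mathbb{R}^n$ to the family of entries $\big((C_i A_i^t x_{0i} - C_j A_j^t x_{0j})_k\big)_{t \in \{0,\dots,2n-1\},\, k \notin \Gamma}$ is injective (i.e., the observability matrix obtained from the pairs $(A_i, \overline{C}_{i,\Gamma})$ and $(A_j, \overline{C}_{j,\Gamma})$,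 where $\overline{C}_{\Gamma}$ denotes the matrix with the rows indexed by $\Gamma$ removed, has full column rank $2n$). -/
open Matrix

/-- A sequence `w : ℕ → ℝᵖ` is cyclic `σ`-sparse if there is a fixed index set `Γ` of
cardinality at most `σ` containing the support of `w t` for all `t`. -/
def CyclicSparse {p : ℕ} (σ : ℕ) (w : ℕ → Fin p → ℝ) : Prop :=
  ∃ Γ : Finset (Fin p), Γ.card ≤ σ ∧ ∀ t : ℕ, ∀ k ∉ Γ, w t k = 0

/-- Two autonomous linear systems under sensor attacks are
`σ`-securely distinguishable iff, for every index set `Γ` with `|Γ| ≤ 2σ`, the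
observability map obtained after removing the output rows indexed by `Γ` is injective
(i.e. the observability matrix of `(Aᵢ, C̄_{i,Γ})`, `(Aⱼ, C̄_{j,Γ})` has full column
rank `2n`). -/
theorem stmt_2 {n p : ℕ} (σ : ℕ) (Ai Aj : Matrix (Fin n) (Fin n) ℝ)
    (Ci Cj : Matrix (Fin p) (Fin n) ℝ) :
    (∀ x0i x0j : Fin n → ℝ, ¬(x0i = 0 ∧ x0j = 0) →
      ∀ wi wj : ℕ → Fin p → ℝ, CyclicSparse σ wi → CyclicSparse σ wj →
        ∃ t, t < 2 * n ∧
          Ci.mulVec ((Ai ^ t).mulVec x0i) + wi t ≠ Cj.mulVec ((Aj ^ t).mulVec x0j) + wj t) ↔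
    (∀ Γ : Finset (Fin p), Γ.card ≤ 2 * σ →
      Function.Injective (fun x : (Fin n → ℝ) × (Fin n → ℝ) =>
        fun tk : Fin (2 * n) × {k : Fin p // k ∉ Γ} =>
          Ci.mulVec ((Ai ^ (tk.1 : ℕ)).mulVec x.1) tk.2.1
            - Cj.mulVec ((Aj ^ (tk.1 : ℕ)).mulVec x.2) tk.2.1)) := by
  constructor
  · intro hsec Γ hΓ
    intro x y hxy
    by_contra hne
    set zi := x.1 - y.1 with hzi
    set zj := x.2 - y.2 with hzj
    have hz : ¬(zi = 0 ∧ zj = 0) := by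
      rintro ⟨h1, h2⟩
      apply hne
      have e1 : x.1 = y.1 := by rwa [hzi, sub_eq_zero] at h1
      have e2 : x.2 = y.2 := by rwa [hzj, sub_eq_zero] at h2
      exact Prod.ext e1 e2
    have hker : ∀ t, t < 2 * n → ∀ k, k ∉ Γ →
        Ci.mulVec ((Ai ^ t).mulVec zi) k = Cj.mulVec ((Aj ^ t).mulVec zj) k := by
      intro t ht k hk
      have h := congrFun hxy (⟨t, ht⟩, ⟨k, hk⟩)
      simp only at h
      simp only [hzi, hzj, Matrix.mulVec_sub, Pi.sub_apply]
      linarith [h]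
    obtain ⟨Γ1, hΓ1sub, hΓ1card, hΓ2card⟩ :
        ∃ Γ1 ⊆ Γ, Γ1.card ≤ σ ∧ (Γ \ Γ1).card ≤ σ := by
      rcases le_or_gt Γ.card σ with h | h
      · exact ⟨Γ, Finset.Subset.refl _, h, by simp⟩
      · obtain ⟨Γ1, hsub, hcard⟩ := Finset.exists_subset_card_eq (le_of_lt h)
        exact ⟨Γ1, hsub, hcard.le, by rw [Finset.card_sdiff_of_subset hsub, hcard]; omega⟩
    set wi : ℕ → Fin p → ℝ := fun t k =>
      if k ∈ Γ1 then Cj.mulVec ((Aj ^ t).mulVec zj) k - Ci.mulVec ((Ai ^ t).mulVec zi) k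
      else 0 with hwi
    set wj : ℕ → Fin p → ℝ := fun t k =>
      if k ∈ Γ \ Γ1 then Ci.mulVec ((Ai ^ t).mulVec zi) k - Cj.mulVec ((Aj ^ t).mulVec zj) k
      else 0 with hwj
    have hsi : CyclicSparse σ wi :=
      ⟨Γ1, hΓ1card, fun t k hk => by simp only [hwi]; rw [if_neg hk]⟩
    have hsj : CyclicSparse σ wj :=
      ⟨Γ \ Γ1, hΓ2card, fun t k hk => by simp only [hwj]; rw [if_neg hk]⟩
    obtain ⟨t, ht, hneq⟩ := hsec zi zj hz wi wj hsi hsj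
    apply hneq
    funext k
    by_cases h1 : k ∈ Γ1
    · have h2 : k ∉ Γ \ Γ1 := fun hm => (Finset.mem_sdiff.mp hm).2 h1
      simp only [Pi.add_apply, hwi, hwj, if_pos h1, if_neg h2]
      ring
    · by_cases h2 : k ∈ Γ
      · have h2' : k ∈ Γ \ Γ1 := Finset.mem_sdiff.mpr ⟨h2, h1⟩
        simp only [Pi.add_apply, hwi, hwj, if_neg h1, if_pos h2']
        ring
      · have h3 : k ∉ Γ \ Γ1 := fun hm => h2 (Finset.mem_sdiff.mp hm).1
        simp only [Pi.add_apply, hwi, hwj, if_neg h1, if_neg h3, add_zero]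
        exact hker t ht k h2
  · intro hinj x0i x0j hx0 wi wj hwi hwj
    obtain ⟨Γi, hΓi, hwi0⟩ := hwi
    obtain ⟨Γj, hΓj, hwj0⟩ := hwj
    by_contra hcon
    push_neg at hcon
    set Γ : Finset (Fin p) := Γi ∪ Γj with hΓ
    have hcard : Γ.card ≤ 2 * σ :=
      le_trans (Finset.card_union_le _ _) (by omega)
    have key : (x0i, x0j) = ((0 : Fin n → ℝ), (0 : Fin n → ℝ)) := by
      apply hinj Γ hcard
      funext tk
      obtain ⟨⟨t, ht⟩, ⟨k, hk⟩⟩ := tk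
      have heq := congrFun (hcon t ht) k
      have hwik : wi t k = 0 := hwi0 t k (fun hm => hk (Finset.mem_union_left _ hm))
      have hwjk : wj t k = 0 := hwj0 t k (fun hm => hk (Finset.mem_union_right _ hm))
      simp only [Pi.add_apply, hwik, hwjk, add_zero] at heq
      simp [heq, Matrix.mulVec_zero]
    apply hx0
    exact ⟨congrArg Prod.fst key, congrArg Prod.snd key⟩
end

section
/- Let $S_i$ and $S_j$ be two autonomous discrete-time linear systems with matrices $A_i, A_j \in \mathbb{R}^{n\times n}$, $C_i, C_j \in \mathbb{R}^{p\times n}$, with $n \geq 1$. If $2\sigma \geq p$, then $S_i$ and $S_j$ are not $\sigma$-securely distinguishable: there exist initial states $(x_{0i}, x_{0j}) \neq (0,0)$ and cyclic $\sigma$-sparse attack sequences $w_i, w_j : \mathbb{N} \to \mathbb{R}^p$ such that $C_i A_i^t x_{0i} + w_i(t) = C_j A_j^t x_{0j} + w_j(t)$ for all $t \in \mathbb{N}$. Consequently, $\sigma$-secure distinguishability requires $2\sigma < p$. -/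
open Matrix

theorem Finset.exists_card_le_and_card_compl_le {α : Type*} [Fintype α] [DecidableEq α]
    {σ : ℕ} (hσ : Fintype.card α ≤ 2 * σ) : ∃ Γ : Finset α, Γ.card ≤ σ ∧ Γᶜ.card ≤ σ := by
  obtain ⟨Γ, -, hΓ⟩ :=
    Finset.exists_subset_card_eq (s := (Finset.univ : Finset α)) (min_le_right σ _)
  refine ⟨Γ, hΓ ▸ min_le_left _ _, ?_⟩
  rw [Finset.card_compl, hΓ, Finset.card_univ]
  omega

theorem cyclicSparse_ite_mem {p σ : ℕ} {Γ : Finset (Fin p)} (hΓ : Γ.card ≤ σ)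
    (y : ℕ → Fin p → ℝ) : CyclicSparse σ (fun t k => if k ∈ Γ then y t k else 0) :=
  ⟨Γ, hΓ, fun _ _ hk => if_neg hk⟩

theorem exists_cyclicSparse_add_eq {p σ : ℕ} (hσ : p ≤ 2 * σ) (y : ℕ → Fin p → ℝ) :
    ∃ wi wj : ℕ → Fin p → ℝ, CyclicSparse σ wi ∧ CyclicSparse σ wj ∧ ∀ t, y t + wi t = wj t := by
  obtain ⟨Γ, hΓ, hΓc⟩ :=
    Finset.exists_card_le_and_card_compl_le (α := Fin p) (by simpa using hσ)
  refine ⟨_, _, cyclicSparse_ite_mem hΓ (-y), cyclicSparse_ite_mem hΓc y, fun t => ?_⟩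
  funext k
  by_cases hk : k ∈ Γ <;> simp [hk]

/-- If `2σ ≥ p` (and `n ≥ 1`), then two autonomous linear systems are
never `σ`-securely distinguishable: there are initial states not both zero and cyclic
`σ`-sparse sensor attacks making the corrupted outputs coincide at all times. Hence
`σ`-secure distinguishability requires `2σ < p`. -/
theorem stmt_3 {n p : ℕ} (σ : ℕ) (hn : 1 ≤ n) (hσ : p ≤ 2 * σ)
    (Ai Aj : Matrix (Fin n) (Fin n) ℝ) (Ci Cj : Matrix (Fin p) (Fin n) ℝ) :
    ∃ (x0i x0j : Fin n → ℝ) (wi wj : ℕ → Fin p → ℝ),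
      ¬(x0i = 0 ∧ x0j = 0) ∧ CyclicSparse σ wi ∧ CyclicSparse σ wj ∧
      ∀ t : ℕ,
        Ci.mulVec ((Ai ^ t).mulVec x0i) + wi t = Cj.mulVec ((Aj ^ t).mulVec x0j) + wj t := by
  have : Nonempty (Fin n) := ⟨⟨0, hn⟩⟩
  obtain ⟨wi, wj, hwi, hwj, hw⟩ := exists_cyclicSparse_add_eq hσ fun t => Ci *ᵥ (Ai ^ t *ᵥ 1)
  refine ⟨1, 0, wi, wj, fun h => one_ne_zero h.1, hwi, hwj, fun t => ?_⟩
  simpa using hw t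
end

section
/- Let $V$ be a finite-dimensional real vector space, $A : V \to V$ a linear map, and $B, K$ subspaces of $V$. Then there exists a subspace $W^* \subseteq K$ with $A(W^*) \subseteq W^* + B$ such that every subspace $W' \subseteq K$ satisfying $A(W') \subseteq W' + B$ is contained in $W^*$. That is, the maximal $(A,B)$-controlled invariant subspace contained in $K$ exists. -/
/-- For a linear map `A` on a finite-dimensional real vector space and
subspaces `B, K`, the maximal `(A, B)`-controlled invariant subspace contained in `K`
exists: a subspace `W* ⊆ K` with `A(W*) ⊆ W* + B` containing every subspace `W' ⊆ K`
with `A(W') ⊆ W' + B`. -/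
theorem stmt_5 {V : Type*} [AddCommGroup V] [Module ℝ V] [FiniteDimensional ℝ V]
    (A : V →ₗ[ℝ] V) (B K : Submodule ℝ V) :
    ∃ Wstar : Submodule ℝ V, Wstar ≤ K ∧ Submodule.map A Wstar ≤ Wstar ⊔ B ∧
      ∀ W' : Submodule ℝ V, W' ≤ K → Submodule.map A W' ≤ W' ⊔ B → W' ≤ Wstar := by
  set S : Set (Submodule ℝ V) := {W | W ≤ K ∧ Submodule.map A W ≤ W ⊔ B}
  refine ⟨sSup S, sSup_le fun W hW => hW.1, ?_, fun W' h1 h2 => le_sSup ⟨h1, h2⟩⟩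
  rw [sSup_eq_iSup', Submodule.map_iSup]
  exact iSup_le fun W => le_trans W.2.2 (sup_le_sup_right (le_iSup (fun W : S => (W : Submodule ℝ V)) W) B)
end

section
/- Let $V$ be a finite-dimensional real vector space, $A : V \to V$ a linear map, and $B_0, B_1, B_2, K$ subspaces of $V$. Let $W^*$ be the maximal $(A, B_0 + B_1 + B_2)$-controlled invariant subspace contained in $K$. If there exists a subspace $\Omega \subseteq K$ satisfying $A(\Omega) + B_0 + B_1 \subseteq \Omega + B_2$, then $B_0 + B_1 \subseteq W^* + B_2$. -/
/-- Let `W*` be the maximal `(A, B₀ + B₁ + B₂)`-controlled invariant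
subspace contained in `K`. If some subspace `Ω ⊆ K` satisfies
`A(Ω) + B₀ + B₁ ⊆ Ω + B₂`, then `B₀ + B₁ ⊆ W* + B₂`. -/
theorem stmt_8 {V : Type*} [AddCommGroup V] [Module ℝ V] [FiniteDimensional ℝ V]
    (A : V →ₗ[ℝ] V) (B0 B1 B2 K Wstar : Submodule ℝ V)
    (hWK : Wstar ≤ K)
    (hWinv : Submodule.map A Wstar ≤ Wstar ⊔ (B0 ⊔ B1 ⊔ B2))
    (hWmax : ∀ W' : Submodule ℝ V, W' ≤ K → Submodule.map A W' ≤ W' ⊔ (B0 ⊔ B1 ⊔ B2) →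
      W' ≤ Wstar)
    (hΩ : ∃ Ω : Submodule ℝ V, Ω ≤ K ∧ Submodule.map A Ω ⊔ B0 ⊔ B1 ≤ Ω ⊔ B2) :
    B0 ⊔ B1 ≤ Wstar ⊔ B2 := by
  obtain ⟨Ω, hΩK, hΩinv⟩ := hΩ
  have hmap : Submodule.map A Ω ≤ Ω ⊔ B2 :=
    le_trans (le_trans le_sup_left le_sup_left) hΩinv
  have hΩW : Ω ≤ Wstar := hWmax Ω hΩK (hmap.trans (sup_le_sup_left le_sup_right Ω))
  have h01 : B0 ⊔ B1 ≤ Ω ⊔ B2 := sup_le (le_trans (le_sup_of_le_left le_sup_right) hΩinv)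
    (le_trans le_sup_right hΩinv)
  exact h01.trans (sup_le_sup_right hΩW B2)
end

section
/- Let $S_i = (A_i, B_i, C_i)$ and $S_j = (A_j, B_j, C_j)$ be discrete-time linear systems with $A_k \in \mathbb{R}^{n\times n}$, $B_k \in \mathbb{R}^{n\times m}$, $C_k \in \mathbb{R}^{p\times n}$. Fix sets $\Gamma \subseteq \{1,\dots,p\}$ with $|\Gamma| \leq 2\sigma$ and $\Delta_i, \Delta_j \subseteq \{1,\dots,m\}$ with $|\Delta_i|, |\Delta_j| \leq \rho$. Define the augmented matrices $A_{ij} = \mathrm{diag}(A_i, A_j) \in \mathbb{R}^{2n\times 2n}$, $B_{ij} = [B_i; B_j] \in \mathbb{R}^{2n\times m}$, $\widehat{B}_i = [\widetilde{B}_{i,\overline{\Delta}_i}; \mathbf{0}]$, $\widehat{B}_j = [\mathbf{0}; \widetilde{B}_{j,\overline{\Delta}_j}]$, $C_{ij} = [C_i \; -C_j] \in \mathbb{R}^{p\times 2n}$, and let $W^*$ be the maximal $(A_{ij}, \mathrm{Im}\,B_{ij} + \mathrm{Im}\,\widehat{B}_i + \mathrm{Im}\,\widehat{B}_j)$-controlled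 invariant subspace contained in $\ker(\overline{C}_{ij,\Gamma})$. Suppose $\mathrm{Im}\,B_{ij} + \mathrm{Im}\,\widehat{B}_i \subseteq W^* + \mathrm{Im}\,\widehat{B}_j$. Then $S_i$ and $S_j$ can be masked: for every input $u : \mathbb{N} \to \mathbb{R}^m$ and every actuator attack $v_i : \mathbb{N} \to \mathbb{R}^m$ with $\mathrm{supp}\,v_i(t) \subseteq \Delta_i$ for all $t$, there exist initial states $x_{0i}, x_{0j} \in \mathbb{R}^n$, an actuator attack $v_j : \mathbb{N} \to \mathbb{R}^m$ with $\mathrm{supp}\,v_j(t) \subseteq \Delta_j$ for all $t$, and cyclic $\sigma$-sparse sensor attacks $w_i, w_j : \mathbb{N} \to \mathbb{R}^p$, such that the trajectories $x_i(t+1) = A_i x_i(t) + B_i(u(t)+v_i(t))$, $x_i(0)=x_{0i}$, and $x_j(t+1) = A_j x_j(t) + B_j(u(t)+v_j(t))$, $x_j(0)=x_{0j}$, satisfy $C_i x_i(t) + w_i(t) = C_j x_j(t) + w_j(t)$ for all $t \in \mathbb{N}$. In particular, $S_i$ and $S_j$ are not $\sigma\rho$-securely distinguishable. -/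
open Matrix

/-- The subspace of vectors of `ℝᵐ` whose support is contained in the index set `Δ`. -/
def suppIn {m : ℕ} (Δ : Finset (Fin m)) : Submodule ℝ (Fin m → ℝ) where
  carrier := {v | ∀ k ∉ Δ, v k = 0}
  add_mem' := by
    intro a b ha hb k hk
    simp only [Pi.add_apply, ha k hk, hb k hk, add_zero]
  zero_mem' := by intro k _; rfl
  smul_mem' := by
    intro c v hv k hk
    simp only [Pi.smul_apply, hv k hk, smul_zero]

/-- The kernel of the matrix `C̄_{ij,Γ} = [C̄_{i,Γ}  -C̄_{j,Γ}]`, i.e. the pairs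
`(xᵢ, xⱼ)` such that `Cᵢ xᵢ` and `Cⱼ xⱼ` agree on all rows not indexed by `Γ`. -/
def kerBar {n p : ℕ} (Ci Cj : Matrix (Fin p) (Fin n) ℝ) (Γ : Finset (Fin p)) :
    Submodule ℝ ((Fin n → ℝ) × (Fin n → ℝ)) where
  carrier := {x | ∀ k ∉ Γ, Ci.mulVec x.1 k = Cj.mulVec x.2 k}
  add_mem' := by
    intro a b ha hb k hk
    simp only [Prod.fst_add, Prod.snd_add, Matrix.mulVec_add, Pi.add_apply,
      ha k hk, hb k hk]
  zero_mem' := by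
    intro k _
    simp [Matrix.mulVec_zero]
  smul_mem' := by
    intro c a ha k hk
    simp only [Prod.smul_fst, Prod.smul_snd, Matrix.mulVec_smul, Pi.smul_apply,
      ha k hk]

/-!
Write `W ⊆ ℝⁿ × ℝⁿ` for the controlled invariant subspace. The inclusion `Im B_{ij} + Im B̂ᵢ ⊆ W + Im B̂ⱼ`
turns controlled invariance into `A_{ij} W + Im B_{ij} + Im B̂ᵢ ⊆ W + Im B̂ⱼ`: whatever the input
`u` and the attack `vᵢ` on `Sᵢ`, an attack `vⱼ` on `Sⱼ` supported in `Δⱼ` brings the joint state back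
into `W`. Starting from `0 ∈ W`, the joint trajectory therefore stays in `W ⊆ ker C̄_{ij,Γ}`, so the
two outputs differ only on the rows in `Γ`; splitting `Γ` into two halves of size at most `σ`
yields the two cyclic `σ`-sparse sensor attacks.
-/

theorem exists_trajectory_of_forall_exists_step {α β : Type*} (S : Set α) (P : ℕ → β → Prop)
    (f : ℕ → α → β → α) {x₀ : α} (h₀ : x₀ ∈ S)
    (hstep : ∀ t, ∀ x ∈ S, ∃ d, P t d ∧ f t x d ∈ S) :
    ∃ (x : ℕ → α) (d : ℕ → β), x 0 = x₀ ∧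
      ∀ t, x t ∈ S ∧ P t (d t) ∧ x (t + 1) = f t (x t) (d t) := by
  choose D hDP hDS using hstep
  let y : ℕ → S := fun t =>
    Nat.rec ⟨x₀, h₀⟩ (fun t y => ⟨f t y (D t y y.2), hDS t y y.2⟩) t
  exact ⟨fun t => (y t).1, fun t => D t (y t).1 (y t).2, rfl, fun t => ⟨(y t).2, hDP _ _ _, rfl⟩⟩

namespace Submodule

variable {R M : Type*} [Ring R] [AddCommGroup M] [Module R M]

theorem add_mem_sup_of_map_le_sup {A : M →ₗ[R] M} {W X Y : Submodule R M}
    (hinv : W.map A ≤ W ⊔ (X ⊔ Y)) (hincl : X ≤ W ⊔ Y) {x b : M} (hx : x ∈ W) (hb : b ∈ X) :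
    A x + b ∈ W ⊔ Y := by
  have hsup : W ⊔ (X ⊔ Y) ≤ W ⊔ Y := sup_le le_sup_left (sup_le hincl le_sup_right)
  exact add_mem (hsup (hinv (mem_map_of_mem hx))) (hincl hb)

theorem exists_add_inr_mem_of_mem_sup {N P : Type*} [AddCommGroup N] [Module R N]
    [AddCommGroup P] [Module R P] {W : Submodule R (M × N)} {B : P →ₗ[R] N} {S : Submodule R P}
    {z : M × N} (hz : z ∈ W ⊔ (S.map B).map (LinearMap.inr R M N)) :
    ∃ d ∈ S, z + (0, B d) ∈ W := by
  obtain ⟨w, hw, _, ⟨_, ⟨e, he, rfl⟩, rfl⟩, rfl⟩ := mem_sup.mp hz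
  refine ⟨-e, S.neg_mem he, ?_⟩
  convert hw using 1
  ext <;> simp

end Submodule

theorem Finset.exists_subset_card_le_card_sdiff_le {α : Type*} [DecidableEq α] {s : Finset α}
    {σ : ℕ} (hs : s.card ≤ 2 * σ) : ∃ t ⊆ s, t.card ≤ σ ∧ (s \ t).card ≤ σ := by
  obtain ⟨t, hts, htcard⟩ := s.exists_subset_card_eq (min_le_right σ s.card)
  refine ⟨t, hts, htcard ▸ min_le_left _ _, ?_⟩
  rw [card_sdiff_of_subset hts, htcard]
  omega

theorem exists_cyclicSparse_sub_eq {p σ : ℕ} {Γ : Finset (Fin p)} (hΓ : Γ.card ≤ 2 * σ)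
    {d : ℕ → Fin p → ℝ} (hd : ∀ t, ∀ k ∉ Γ, d t k = 0) :
    ∃ w w' : ℕ → Fin p → ℝ, CyclicSparse σ w ∧ CyclicSparse σ w' ∧ ∀ t, w t - w' t = d t := by
  classical
  obtain ⟨Γ₁, -, hΓ₁, hΓ₂⟩ := Finset.exists_subset_card_le_card_sdiff_le hΓ
  refine ⟨fun t k => if k ∈ Γ₁ then d t k else 0, fun t k => if k ∈ Γ₁ then 0 else -d t k,
    ⟨Γ₁, hΓ₁, fun t k hk => if_neg hk⟩, ⟨Γ \ Γ₁, hΓ₂, fun t k hk => ?_⟩, fun t => ?_⟩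
  · by_cases h₁ : k ∈ Γ₁
    · exact if_pos h₁
    · simp [h₁, hd t k fun hkΓ => hk (Finset.mem_sdiff.mpr ⟨hkΓ, h₁⟩)]
  · ext k
    by_cases h₁ : k ∈ Γ₁ <;> simp [h₁]

theorem stmt_12_general {n m p : ℕ} (σ : ℕ)
    (Ai Aj : Matrix (Fin n) (Fin n) ℝ) (Bi Bj : Matrix (Fin n) (Fin m) ℝ)
    (Ci Cj : Matrix (Fin p) (Fin n) ℝ)
    (Γ : Finset (Fin p)) (Δi Δj : Finset (Fin m))
    (hΓ : Γ.card ≤ 2 * σ)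
    (Wstar : Submodule ℝ ((Fin n → ℝ) × (Fin n → ℝ)))
    -- `W*` is the maximal controlled invariant subspace contained in `ker C̄_{ij,Γ}`:
    (hWK : Wstar ≤ kerBar Ci Cj Γ)
    (hWinv : Submodule.map (LinearMap.prodMap Ai.mulVecLin Aj.mulVecLin) Wstar ≤
      Wstar ⊔ (LinearMap.range (Bi.mulVecLin.prod Bj.mulVecLin) ⊔
        Submodule.map (LinearMap.inl ℝ (Fin n → ℝ) (Fin n → ℝ))
          (Submodule.map Bi.mulVecLin (suppIn Δi)) ⊔
        Submodule.map (LinearMap.inr ℝ (Fin n → ℝ) (Fin n → ℝ))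
          (Submodule.map Bj.mulVecLin (suppIn Δj))))
    -- the inclusion `Im B_{ij} + Im B̂ᵢ ⊆ W* + Im B̂ⱼ`:
    (hIncl : LinearMap.range (Bi.mulVecLin.prod Bj.mulVecLin) ⊔
      Submodule.map (LinearMap.inl ℝ (Fin n → ℝ) (Fin n → ℝ))
        (Submodule.map Bi.mulVecLin (suppIn Δi)) ≤
      Wstar ⊔ Submodule.map (LinearMap.inr ℝ (Fin n → ℝ) (Fin n → ℝ))
        (Submodule.map Bj.mulVecLin (suppIn Δj))) :
    ∀ (u vi : ℕ → Fin m → ℝ), (∀ t : ℕ, ∀ k ∉ Δi, vi t k = 0) →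
      ∃ (x0i x0j : Fin n → ℝ) (vj : ℕ → Fin m → ℝ) (wi wj : ℕ → Fin p → ℝ)
        (xi xj : ℕ → Fin n → ℝ),
        (∀ t : ℕ, ∀ k ∉ Δj, vj t k = 0) ∧
        CyclicSparse σ wi ∧ CyclicSparse σ wj ∧
        xi 0 = x0i ∧ xj 0 = x0j ∧
        (∀ t : ℕ, xi (t + 1) = Ai.mulVec (xi t) + Bi.mulVec (u t + vi t)) ∧
        (∀ t : ℕ, xj (t + 1) = Aj.mulVec (xj t) + Bj.mulVec (u t + vj t)) ∧
        ∀ t : ℕ, Ci.mulVec (xi t) + wi t = Cj.mulVec (xj t) + wj t := by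
  intro u vi hvi
  set inputs := LinearMap.range (Bi.mulVecLin.prod Bj.mulVecLin) ⊔
    Submodule.map (LinearMap.inl ℝ (Fin n → ℝ) (Fin n → ℝ))
      (Submodule.map Bi.mulVecLin (suppIn Δi))
  have hinput : ∀ t, (Bi *ᵥ (u t + vi t), Bj *ᵥ u t) ∈ inputs := fun t => by
    have hsplit : (Bi *ᵥ (u t + vi t), Bj *ᵥ u t) =
        (Bi *ᵥ u t, Bj *ᵥ u t) + (Bi *ᵥ vi t, 0) := by
      simp [Matrix.mulVec_add]
    rw [hsplit]
    exact Submodule.add_mem_sup ⟨u t, rfl⟩ ⟨_, ⟨vi t, hvi t, rfl⟩, rfl⟩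
  have hstep : ∀ t, ∀ x ∈ Wstar, ∃ d : Fin m → ℝ, d ∈ suppIn Δj ∧
      (Ai *ᵥ x.1 + Bi *ᵥ (u t + vi t), Aj *ᵥ x.2 + Bj *ᵥ (u t + d)) ∈ Wstar := by
    intro t x hx
    obtain ⟨d, hd, hdW⟩ := Submodule.exists_add_inr_mem_of_mem_sup
      (Submodule.add_mem_sup_of_map_le_sup hWinv hIncl hx (hinput t))
    exact ⟨d, hd, by simpa [Matrix.mulVec_add, add_assoc] using hdW⟩
  obtain ⟨x, vj, -, hx⟩ := exists_trajectory_of_forall_exists_step (Wstar : Set _)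
    (fun _ d => d ∈ suppIn Δj)
    (fun t x d => (Ai *ᵥ x.1 + Bi *ᵥ (u t + vi t), Aj *ᵥ x.2 + Bj *ᵥ (u t + d)))
    Wstar.zero_mem hstep
  obtain ⟨wi, wj, hwi, hwj, hw⟩ := exists_cyclicSparse_sub_eq hΓ
    (d := fun t => Cj *ᵥ (x t).2 - Ci *ᵥ (x t).1) fun t k hk =>
      sub_eq_zero.mpr (hWK (hx t).1 k hk).symm
  refine ⟨_, _, vj, wi, wj, fun t => (x t).1, fun t => (x t).2, fun t => (hx t).2.1, hwi, hwj,
    rfl, rfl, fun t => congrArg Prod.fst (hx t).2.2, fun t => congrArg Prod.snd (hx t).2.2,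
    fun t => ?_⟩
  linear_combination hw t

/-- (Necessity half of Theorem 3.) With `W*` the maximal
`(A_{ij}, Im B_{ij} + Im B̂ᵢ + Im B̂ⱼ)`-controlled invariant subspace contained in
`ker C̄_{ij,Γ}`, if `Im B_{ij} + Im B̂ᵢ ⊆ W* + Im B̂ⱼ` then `Sᵢ` and `Sⱼ` can be
masked: for every input `u` and every actuator attack `vᵢ` supported in `Δᵢ` there
are initial states, an actuator attack `vⱼ` supported in `Δⱼ`, and cyclic `σ`-sparse
sensor attacks `wᵢ, wⱼ` making the corrupted outputs coincide at all times. -/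
theorem stmt_12 {n m p : ℕ} (σ ρ : ℕ)
    (Ai Aj : Matrix (Fin n) (Fin n) ℝ) (Bi Bj : Matrix (Fin n) (Fin m) ℝ)
    (Ci Cj : Matrix (Fin p) (Fin n) ℝ)
    (Γ : Finset (Fin p)) (Δi Δj : Finset (Fin m))
    (hΓ : Γ.card ≤ 2 * σ) (hΔi : Δi.card ≤ ρ) (hΔj : Δj.card ≤ ρ)
    (Wstar : Submodule ℝ ((Fin n → ℝ) × (Fin n → ℝ)))
    -- `W*` is the maximal controlled invariant subspace contained in `ker C̄_{ij,Γ}`: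
    (hWK : Wstar ≤ kerBar Ci Cj Γ)
    (hWinv : Submodule.map (LinearMap.prodMap Ai.mulVecLin Aj.mulVecLin) Wstar ≤
      Wstar ⊔ (LinearMap.range (Bi.mulVecLin.prod Bj.mulVecLin) ⊔
        Submodule.map (LinearMap.inl ℝ (Fin n → ℝ) (Fin n → ℝ))
          (Submodule.map Bi.mulVecLin (suppIn Δi)) ⊔
        Submodule.map (LinearMap.inr ℝ (Fin n → ℝ) (Fin n → ℝ))
          (Submodule.map Bj.mulVecLin (suppIn Δj))))
    (hWmax : ∀ W' : Submodule ℝ ((Fin n → ℝ) × (Fin n → ℝ)), W' ≤ kerBar Ci Cj Γ →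
      Submodule.map (LinearMap.prodMap Ai.mulVecLin Aj.mulVecLin) W' ≤
        W' ⊔ (LinearMap.range (Bi.mulVecLin.prod Bj.mulVecLin) ⊔
          Submodule.map (LinearMap.inl ℝ (Fin n → ℝ) (Fin n → ℝ))
            (Submodule.map Bi.mulVecLin (suppIn Δi)) ⊔
          Submodule.map (LinearMap.inr ℝ (Fin n → ℝ) (Fin n → ℝ))
            (Submodule.map Bj.mulVecLin (suppIn Δj))) → W' ≤ Wstar)
    -- the inclusion `Im B_{ij} + Im B̂ᵢ ⊆ W* + Im B̂ⱼ`: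
    (hIncl : LinearMap.range (Bi.mulVecLin.prod Bj.mulVecLin) ⊔
      Submodule.map (LinearMap.inl ℝ (Fin n → ℝ) (Fin n → ℝ))
        (Submodule.map Bi.mulVecLin (suppIn Δi)) ≤
      Wstar ⊔ Submodule.map (LinearMap.inr ℝ (Fin n → ℝ) (Fin n → ℝ))
        (Submodule.map Bj.mulVecLin (suppIn Δj))) :
    ∀ (u vi : ℕ → Fin m → ℝ), (∀ t : ℕ, ∀ k ∉ Δi, vi t k = 0) →
      ∃ (x0i x0j : Fin n → ℝ) (vj : ℕ → Fin m → ℝ) (wi wj : ℕ → Fin p → ℝ)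
        (xi xj : ℕ → Fin n → ℝ),
        (∀ t : ℕ, ∀ k ∉ Δj, vj t k = 0) ∧
        CyclicSparse σ wi ∧ CyclicSparse σ wj ∧
        xi 0 = x0i ∧ xj 0 = x0j ∧
        (∀ t : ℕ, xi (t + 1) = Ai.mulVec (xi t) + Bi.mulVec (u t + vi t)) ∧
        (∀ t : ℕ, xj (t + 1) = Aj.mulVec (xj t) + Bj.mulVec (u t + vj t)) ∧
        ∀ t : ℕ, Ci.mulVec (xi t) + wi t = Cj.mulVec (xj t) + wj t :=
  stmt_12_general σ Ai Aj Bi Bj Ci Cj Γ Δi Δj hΓ Wstar hWK hWinv hIncl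
end
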